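/- arXiv:1603.07010 — 2 statements merged into one kernel-verified Lean document; each statement's English description precedes it below -/
import Mathlib

section
/- As n → ∞, the shaping gain of the n-dimensional ball, γ_s(⊗_n) = 1/(12 G(⊗_n)) = π(n+2)/(12 Γ(n/2+1)^{2/n}), converges to πe/6. -/
/-!
Write `log Γ(x + 1) = x log x - x + R(x)`; the theorem amounts to `R(x) = o(x)`. At integers this
is the crude form of Stirling's formula: `R(n) = log (stirlingSeq n) + log (2n) / 2` with
`stirlingSeq n → √π`. For real `x`, monotonicity of `Γ` on `[2, ∞)` squeezes `Γ(x + 1)` between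
`⌊x⌋!` and `(⌊x⌋ + 1)!`, which moves `R` by only `O(log x)`. Hence
`x / Γ(x + 1)^(1/x) = exp (1 - R(x)/x) → e`, and at `x = n/2` the shaping gain is
`(π/6) (1 + 1/x) x / Γ(x + 1)^(1/x)`.
-/

open Real Filter Asymptotics

noncomputable def stirlingRemainder (x : ℝ) : ℝ := log (Gamma (x + 1)) - (x * log x - x)

lemma stirlingRemainder_natCast {n : ℕ} (hn : n ≠ 0) :
    stirlingRemainder n = (log (Stirling.stirlingSeq n) + log 2 / 2) + log n / 2 := by
  have hn' : (n : ℝ) ≠ 0 := by exact_mod_cast hn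
  rw [stirlingRemainder, Gamma_nat_eq_factorial, Stirling.log_stirlingSeq_formula,
    log_mul two_ne_zero hn', log_div hn' (exp_ne_zero 1), log_exp]
  ring

lemma isLittleO_stirlingRemainder_natCast :
    (fun n : ℕ => stirlingRemainder n) =o[atTop] (fun n : ℕ => (n : ℝ)) := by
  have hbounded : (fun n : ℕ => log (Stirling.stirlingSeq n) + log 2 / 2) =o[atTop]
      (fun n : ℕ => (n : ℝ)) :=
    ((Stirling.tendsto_stirlingSeq_sqrt_pi.log (by positivity)).add_const _).isBigO_one ℝ
      |>.trans_isLittleO <| (isLittleO_one_left_iff ℝ).2 <|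
        tendsto_norm_atTop_atTop.comp tendsto_natCast_atTop_atTop
  have hlog : (fun n : ℕ => log n / 2) =o[atTop] (fun n : ℕ => (n : ℝ)) := by
    simp only [div_eq_inv_mul]
    exact (isLittleO_log_id_atTop.comp_tendsto tendsto_natCast_atTop_atTop).const_mul_left _
  refine (hbounded.add hlog).congr' ?_ EventuallyEq.rfl
  filter_upwards [eventually_ne_atTop 0] with n hn
  exact (stirlingRemainder_natCast hn).symm

lemma mul_log_sub_self_sub_mem_Icc {m x : ℝ} (hm : 1 ≤ m) (hmx : m ≤ x) (hxm : x ≤ m + 1) :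
    (x * log x - x) - (m * log m - m) ∈ Set.Icc (-1) (log x) := by
  have hm0 : 0 < m := by linarith
  have hlogx : 0 ≤ log x := log_nonneg (by linarith)
  have hdecomp :
      (x * log x - x) - (m * log m - m) = (x - m) * log x + m * log (x / m) - (x - m) := by
    rw [log_div (by linarith) hm0.ne']
    ring
  obtain ⟨hratio_nonneg, hratio_le⟩ : 0 ≤ m * log (x / m) ∧ m * log (x / m) ≤ x - m := by
    refine ⟨mul_nonneg hm0.le (log_nonneg ((one_le_div hm0).2 hmx)), ?_⟩
    calc m * log (x / m) ≤ m * (x / m - 1) := by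
          gcongr; exact log_le_sub_one_of_pos (div_pos (by linarith) hm0)
      _ = x - m := by field_simp
  have hslope_nonneg : 0 ≤ (x - m) * log x := mul_nonneg (by linarith) hlogx
  have hslope_le : (x - m) * log x ≤ log x := mul_le_of_le_one_left hlogx (by linarith)
  constructor <;> linarith

lemma Gamma_add_one_mem_Icc_natFloor {x : ℝ} (hx : 1 ≤ x) :
    Gamma (x + 1) ∈ Set.Icc (Gamma (⌊x⌋₊ + 1)) ((⌊x⌋₊ + 1) * Gamma (⌊x⌋₊ + 1)) := by
  have hmono := Gamma_strictMonoOn_Ici.monotoneOn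
  have h1 : (1 : ℝ) ≤ ⌊x⌋₊ := by exact_mod_cast Nat.one_le_floor_iff x |>.2 hx
  have hfloor := Nat.floor_le (zero_le_one.trans hx)
  have hlt := Nat.lt_floor_add_one x
  rw [← Gamma_add_one (by positivity)]
  exact ⟨hmono (Set.mem_Ici.2 (by linarith)) (Set.mem_Ici.2 (by linarith)) (by linarith),
    hmono (Set.mem_Ici.2 (by linarith)) (Set.mem_Ici.2 (by linarith)) (by linarith)⟩

lemma abs_stirlingRemainder_sub_natFloor_le {x : ℝ} (hx : 1 ≤ x) :
    |stirlingRemainder x - stirlingRemainder ⌊x⌋₊| ≤ log x + 2 := by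
  set m := ⌊x⌋₊
  have h1 : (1 : ℝ) ≤ m := by exact_mod_cast Nat.one_le_floor_iff x |>.2 hx
  have hmx : (m : ℝ) ≤ x := Nat.floor_le (zero_le_one.trans hx)
  have hxm : x < m + 1 := Nat.lt_floor_add_one x
  obtain ⟨hGlo, hGhi⟩ := Gamma_add_one_mem_Icc_natFloor hx
  have hGpos : 0 < Gamma (m + 1) := Gamma_pos_of_pos (by positivity)
  have hlogGlo := log_le_log hGpos hGlo
  have hlogGhi := log_le_log (Gamma_pos_of_pos (by linarith)) hGhi
  rw [log_mul (by positivity) hGpos.ne'] at hlogGhi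
  have hlogm : log (m + 1) ≤ log x + 1 := by
    calc log (m + 1) ≤ log (2 * x) := log_le_log (by positivity) (by linarith)
      _ = log 2 + log x := log_mul two_ne_zero (by positivity)
      _ ≤ log x + 1 := by linarith [log_two_lt_d9]
  obtain ⟨hh1, hh2⟩ := mul_log_sub_self_sub_mem_Icc h1 hmx hxm.le
  unfold stirlingRemainder
  rw [abs_le]
  constructor <;> linarith

lemma isLittleO_stirlingRemainder : stirlingRemainder =o[atTop] id := by
  have hfloor : (fun x : ℝ => stirlingRemainder ⌊x⌋₊) =o[atTop] id := by
    refine (isLittleO_stirlingRemainder_natCast.comp_tendsto tendsto_nat_floor_atTop).trans_isBigO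
      (IsBigO.of_bound 1 ?_)
    filter_upwards [eventually_ge_atTop 0] with x hx
    simpa [abs_of_nonneg hx] using Nat.floor_le hx
  have hdiff : (fun x => stirlingRemainder x - stirlingRemainder ⌊x⌋₊) =o[atTop] id := by
    refine (IsBigO.of_bound 1 ?_).trans_isLittleO
      (isLittleO_log_id_atTop.add (isLittleO_const_id_atTop (2 : ℝ)))
    filter_upwards [eventually_ge_atTop 1] with x hx
    rw [one_mul, Real.norm_eq_abs, Real.norm_eq_abs, abs_of_nonneg (a := log x + 2)
      (by linarith [log_nonneg hx])]
    exact abs_stirlingRemainder_sub_natFloor_le hx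
  simpa using hdiff.add hfloor

lemma tendsto_self_div_Gamma_add_one_rpow_inv :
    Tendsto (fun x : ℝ => x / Gamma (x + 1) ^ x⁻¹) atTop (nhds (exp 1)) := by
  have hlim := (isLittleO_stirlingRemainder.tendsto_div_nhds_zero.const_sub 1).rexp
  rw [sub_zero] at hlim
  refine hlim.congr' ?_
  filter_upwards [eventually_gt_atTop 0] with x hx
  have hG : 0 < Gamma (x + 1) := Gamma_pos_of_pos (by linarith)
  have hexponent : 1 - stirlingRemainder x / x + log (Gamma (x + 1)) * x⁻¹ = log x := by
    rw [stirlingRemainder]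
    field_simp
    ring
  rw [rpow_def_of_pos hG, eq_div_iff (exp_pos _).ne', ← exp_add, id, hexponent, exp_log hx]

/-- The shaping gain of the `n`-dimensional ball,
`π(n+2)/(12 Γ(n/2+1)^{2/n})`, converges to `πe/6` as `n → ∞`. -/
theorem stmt_16 :
    Tendsto (fun n : ℕ =>
        π * ((n : ℝ) + 2) / (12 * Real.Gamma ((n : ℝ) / 2 + 1) ^ ((2 : ℝ) / n)))
      atTop (nhds (π * Real.exp 1 / 6)) := by
  have hreal : Tendsto (fun x : ℝ => π / 6 * ((1 + x⁻¹) * (x / Gamma (x + 1) ^ x⁻¹))) atTop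
      (nhds (π * exp 1 / 6)) := by
    convert ((tendsto_inv_atTop_zero.const_add 1).mul
      tendsto_self_div_Gamma_add_one_rpow_inv).const_mul (π / 6) using 2
    ring
  refine (hreal.comp (tendsto_natCast_atTop_atTop.atTop_div_const two_pos)).congr' ?_
  filter_upwards [eventually_ne_atTop 0] with n hn
  have hn' : (n : ℝ) ≠ 0 := by exact_mod_cast hn
  rw [Function.comp_apply, inv_div]
  field_simp
  ring
end

section
/- For any compact region R ⊆ ℝ^n of positive volume, the normalized second moment satisfies G(R) ≥ G(⊗) where ⊗ is the n-dimensional ball; equivalently the shaping loss λ_s(R) = G(R)/G(⊗) is at least 1. -/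
/-!
The ball `B` centred at the origin with the same volume as `R` has the same normalized second
moment as every other centred ball, since `G` is scale invariant. Comparing `R` with `B` then
only involves the second moments `∫ ‖x‖²`, and these compare by the bathtub principle: `R \ B` and
`B \ R` have equal volume, and `‖x‖² ≥ ρ²` on the first while `‖x‖² ≤ ρ²` on the second, where
`ρ` is the radius of `B`.
-/

open MeasureTheory Metric Module

theorem setIntegral_le_setIntegral_of_measure_eq {α : Type*} [MeasurableSpace α]
    {μ : Measure α} {f : α → ℝ} {s t : Set α} {c : ℝ} (hs : MeasurableSet s)
    (ht : MeasurableSet t) (hμ : μ s = μ t) (hμs : μ s ≠ ⊤) (hfs : IntegrableOn f s μ)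
    (hft : IntegrableOn f t μ) (hle : ∀ x ∈ s, f x ≤ c) (hge : ∀ x ∈ t \ s, c ≤ f x) :
    ∫ x in s, f x ∂μ ≤ ∫ x in t, f x ∂μ := by
  have hst : μ (s \ t) ≠ ⊤ := measure_ne_top_of_subset Set.sdiff_subset hμs
  have hsdiff : μ (s \ t) = μ (t \ s) :=
    measure_sdiff_symm hs.nullMeasurableSet ht.nullMeasurableSet hμ
      (measure_ne_top_of_subset Set.inter_subset_left hμs)
  have upper : ∫ x in s \ t, f x ∂μ ≤ c * μ.real (t \ s) :=
    calc ∫ x in s \ t, f x ∂μ ≤ ∫ _ in s \ t, c ∂μ :=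
          setIntegral_mono_on (hfs.mono_set Set.sdiff_subset) (integrableOn_const hst)
            (hs.diff ht) fun x hx => hle x hx.1
      _ = c * μ.real (t \ s) := by
        rw [setIntegral_const, smul_eq_mul, mul_comm, measureReal_def, hsdiff, measureReal_def]
  have lower : c * μ.real (t \ s) ≤ ∫ x in t \ s, f x ∂μ :=
    setIntegral_ge_of_const_le_real (ht.diff hs) (hsdiff ▸ hst) hge
      (hft.mono_set Set.sdiff_subset)
  rw [← integral_inter_add_sdiff ht hfs, ← integral_inter_add_sdiff hs hft, Set.inter_comm]
  linarith

section HaarMeasure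

variable {E : Type*} [NormedAddCommGroup E] [NormedSpace ℝ E] [FiniteDimensional ℝ E]
  [MeasurableSpace E] [BorelSpace E] (μ : Measure E) [μ.IsAddHaarMeasure]

theorem setIntegral_closedBall_norm_sq {r : ℝ} (hr : 0 < r) :
    ∫ x in closedBall (0 : E) r, ‖x‖ ^ 2 ∂μ =
      r ^ (finrank ℝ E + 2) * ∫ x in closedBall (0 : E) 1, ‖x‖ ^ 2 ∂μ := by
  have h := Measure.setIntegral_comp_smul_of_pos μ (fun x : E => ‖x‖ ^ 2) (closedBall 0 1) hr
  simp only [smul_unitClosedBall_of_nonneg hr.le, norm_smul, mul_pow, Real.norm_eq_abs, sq_abs,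
    integral_const_mul, smul_eq_mul] at h
  rw [eq_inv_mul_iff_mul_eq₀ (pow_ne_zero _ hr.ne')] at h
  rw [← h, pow_add]
  ring

theorem exists_pos_addHaar_closedBall_eq [Nontrivial E] {m : ENNReal} (h0 : m ≠ 0)
    (htop : m ≠ ⊤) : ∃ ρ > 0, μ (closedBall (0 : E) ρ) = m := by
  set ω := μ (closedBall (0 : E) 1)
  have hω0 : ω ≠ 0 := (measure_closedBall_pos μ 0 one_pos).ne'
  have hωtop : ω ≠ ⊤ := measure_closedBall_lt_top.ne
  have hd : finrank ℝ E ≠ 0 := finrank_pos.ne'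
  have hfin : m / ω ≠ ⊤ := ENNReal.div_ne_top htop hω0
  have hv : 0 < (m / ω).toReal := ENNReal.toReal_pos (ENNReal.div_pos h0 hωtop).ne' hfin
  refine ⟨(m / ω).toReal ^ ((finrank ℝ E : ℝ)⁻¹), Real.rpow_pos_of_pos hv _, ?_⟩
  rw [Measure.addHaar_closedBall' μ 0 (Real.rpow_nonneg hv.le _),
    Real.rpow_inv_natCast_pow hv.le hd, ENNReal.ofReal_toReal hfin,
    ENNReal.div_mul_cancel hω0 hωtop]

noncomputable def normalizedSecondMoment (R : Set E) : ℝ :=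
  ((∫ x in R, ‖x‖ ^ 2 / finrank ℝ E ∂μ) / μ.real R) / μ.real R ^ ((2 : ℝ) / finrank ℝ E)

theorem normalizedSecondMoment_closedBall [Nontrivial E] {r : ℝ} (hr : 0 < r) :
    normalizedSecondMoment μ (closedBall (0 : E) r) =
      normalizedSecondMoment μ (closedBall (0 : E) 1) := by
  simp only [normalizedSecondMoment, integral_div]
  rw [setIntegral_closedBall_norm_sq μ hr, Measure.addHaar_real_closedBall' μ 0 hr.le, pow_add]
  set d := finrank ℝ E
  set ω := μ.real (closedBall (0 : E) 1)
  have hω : 0 < ω :=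
    ENNReal.toReal_pos (measure_closedBall_pos μ 0 one_pos).ne' measure_closedBall_lt_top.ne
  have hd : (d : ℝ) ≠ 0 := Nat.cast_ne_zero.mpr finrank_pos.ne'
  have hpow : (r ^ d * ω) ^ ((2 : ℝ) / d) = r ^ 2 * ω ^ ((2 : ℝ) / d) := by
    rw [Real.mul_rpow (by positivity) hω.le, ← Real.rpow_natCast r d, ← Real.rpow_mul hr.le,
      mul_div_cancel₀ _ hd, Real.rpow_two]
  have : 0 < ω ^ ((2 : ℝ) / d) := Real.rpow_pos_of_pos hω _
  rw [hpow]
  field_simp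

theorem normalizedSecondMoment_closedBall_le_of_measure_eq {R : Set E} (hR : IsCompact R)
    {ρ : ℝ} (hρ : 0 ≤ ρ) (hμ : μ (closedBall (0 : E) ρ) = μ R) :
    normalizedSecondMoment μ (closedBall (0 : E) ρ) ≤ normalizedSecondMoment μ R := by
  have hsq : LocallyIntegrable (fun x : E => ‖x‖ ^ 2) μ := (continuous_norm.pow 2).locallyIntegrable
  have hmoment : ∫ x in closedBall (0 : E) ρ, ‖x‖ ^ 2 ∂μ ≤ ∫ x in R, ‖x‖ ^ 2 ∂μ :=
    setIntegral_le_setIntegral_of_measure_eq (c := ρ ^ 2) measurableSet_closedBall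
      hR.measurableSet hμ measure_closedBall_lt_top.ne
      (hsq.integrableOn_isCompact (isCompact_closedBall 0 ρ)) (hsq.integrableOn_isCompact hR)
      (fun x hx => pow_le_pow_left₀ (norm_nonneg x) (mem_closedBall_zero_iff.mp hx) 2)
      (fun x hx => pow_le_pow_left₀ hρ (not_le.mp (mt mem_closedBall_zero_iff.mpr hx.2)).le 2)
  simp only [normalizedSecondMoment, integral_div, measureReal_def, hμ]
  gcongr

theorem normalizedSecondMoment_closedBall_le [Nontrivial E] {R : Set E} (hR : IsCompact R)
    (hpos : 0 < μ R) {r : ℝ} (hr : 0 < r) :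
    normalizedSecondMoment μ (closedBall (0 : E) r) ≤ normalizedSecondMoment μ R := by
  obtain ⟨ρ, hρ, hρR⟩ := exists_pos_addHaar_closedBall_eq μ hpos.ne' hR.measure_lt_top.ne
  calc normalizedSecondMoment μ (closedBall (0 : E) r)
      = normalizedSecondMoment μ (closedBall (0 : E) ρ) := by
        rw [normalizedSecondMoment_closedBall μ hr, normalizedSecondMoment_closedBall μ hρ]
    _ ≤ normalizedSecondMoment μ R :=
        normalizedSecondMoment_closedBall_le_of_measure_eq μ hR hρ.le hρR

end HaarMeasure

/-- The ball minimizes the normalized second moment: for any compact region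
`R ⊆ ℝ^n` of positive volume, `G(R) ≥ G(⊗)` where `⊗` is an `n`-ball. -/
theorem stmt_17 (n : ℕ) (hn : 0 < n) (R : Set (EuclideanSpace ℝ (Fin n)))
    (hR : IsCompact R) (hvol : 0 < volume R) (r : ℝ) (hr : 0 < r) :
    ((∫ x in Metric.closedBall (0 : EuclideanSpace ℝ (Fin n)) r, ‖x‖ ^ 2 / n) /
          (volume (Metric.closedBall (0 : EuclideanSpace ℝ (Fin n)) r)).toReal) /
        (volume (Metric.closedBall (0 : EuclideanSpace ℝ (Fin n)) r)).toReal ^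
          ((2 : ℝ) / n) ≤
      ((∫ x in R, ‖x‖ ^ 2 / n) / (volume R).toReal) /
        (volume R).toReal ^ ((2 : ℝ) / n) := by
  have : Nontrivial (EuclideanSpace ℝ (Fin n)) :=
    finrank_pos_iff.mp (by rwa [finrank_euclideanSpace_fin])
  simpa only [normalizedSecondMoment, finrank_euclideanSpace_fin, measureReal_def] using
    normalizedSecondMoment_closedBall_le volume hR hvol hr
end
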